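/- arXiv:0906.1797 — 4 statements merged into one kernel-verified Lean document; each statement's English description precedes it below -/
import Mathlib

section
/- Let a > 0, m > 0, x₀ > 0 and let β > α ≥ 0 be real numbers with β > 0. Let A = {(x,y) : 0 < x < x₀, 0 < y < x^m} and h(x,y) = a·x^α·y^β. Then there exist constants c, C > 0 (depending on a, m, α, β) such that for all sufficiently small ε > 0: c·x₀^((β-α)/β)·ε^(1/β) < |{(x,y) ∈ A : |h(x,y)| < ε}| < C·x₀^((β-α)/β)·ε^(1/β). -/
/-!
Since `a x^α y^β < ε ↔ y < (ε/a)^(1/β) x^(-α/β)`, the sublevel set lies under the graph of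
`x ↦ (ε/a)^(1/β) x^(-α/β)` over `(0, x₀)`; the exponent `-α/β` exceeds `-1`, so this region has
area `(ε/a)^(1/β) x₀^((β-α)/β) β/(β-α)`. Conversely, once `(ε/a)^(1/β) x₀^(-α/β) ≤ (x₀/2)^m`,
the rectangle `(x₀/2, x₀) × (0, (ε/a)^(1/β) x₀^(-α/β))` lies in the curved triangle and, as
`x^(-α/β)` decreases, inside the sublevel set; its area is `(ε/a)^(1/β) x₀^((β-α)/β) / 2`.
-/

open MeasureTheory Set Filter Topology

theorem volume_regionBetween_zero_mul_rpow {k r x₀ : ℝ} (hk : 0 ≤ k) (hr : -1 < r)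
    (hx₀ : 0 ≤ x₀) :
    volume (regionBetween 0 (fun x => k * x ^ r) (Ioo 0 x₀)) =
      ENNReal.ofReal (k * (x₀ ^ (r + 1) / (r + 1))) := by
  have hint : IntegrableOn (fun x : ℝ => k * x ^ r) (Ioo 0 x₀) :=
    ((intervalIntegrable_iff_integrableOn_Ioo_of_le hx₀).1
      (intervalIntegral.intervalIntegrable_rpow' hr)).const_mul k
  rw [Measure.volume_eq_prod, volume_regionBetween_eq_integral (f := 0) integrableOn_zero
    hint measurableSet_Ioo fun x hx => by have := hx.1; simp only [Pi.zero_apply]; positivity]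
  simp only [Pi.sub_apply, Pi.zero_apply, sub_zero]
  rw [integral_const_mul, ← integral_Ioc_eq_integral_Ioo, ← intervalIntegral.integral_of_le hx₀,
    integral_rpow (Or.inl hr), Real.zero_rpow (by linarith), sub_zero]

theorem mul_rpow_mul_rpow_lt_iff {a x y α β ε : ℝ} (ha : 0 < a) (hx : 0 < x) (hy : 0 ≤ y)
    (hβ : 0 < β) (hε : 0 ≤ ε) :
    a * x ^ α * y ^ β < ε ↔ y < (ε / a) ^ β⁻¹ * x ^ (-(α / β)) := by
  have hxα : 0 < x ^ α := Real.rpow_pos_of_pos hx α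
  have hroot : (ε / a) ^ β⁻¹ * x ^ (-(α / β)) = (ε / (a * x ^ α)) ^ β⁻¹ := by
    rw [div_mul_eq_div_div, Real.div_rpow (by positivity) hxα.le, ← Real.rpow_mul hx.le,
      Real.rpow_neg hx.le, div_eq_mul_inv _ β, ← div_eq_mul_inv]
  rw [hroot, Real.lt_rpow_inv_iff_of_pos hy (by positivity) hβ, lt_div_iff₀ (by positivity),
    mul_comm]

def monomialSublevel (a m x₀ α β ε : ℝ) : Set (ℝ × ℝ) :=
  {p | (0 < p.1 ∧ p.1 < x₀ ∧ 0 < p.2 ∧ p.2 < p.1 ^ m) ∧ |a * p.1 ^ α * p.2 ^ β| < ε}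

section
variable {a m x₀ α β ε : ℝ}

theorem monomialSublevel_subset_regionBetween (ha : 0 < a) (hβ : 0 < β) :
    monomialSublevel a m x₀ α β ε ⊆
      regionBetween 0 (fun x => (ε / a) ^ β⁻¹ * x ^ (-(α / β))) (Ioo 0 x₀) := by
  rintro ⟨x, y⟩ ⟨⟨hx, hxx₀, hy, -⟩, hlt⟩
  have hpos : 0 < a * x ^ α * y ^ β := by
    have := Real.rpow_pos_of_pos hx α; have := Real.rpow_pos_of_pos hy β; positivity
  rw [abs_of_pos hpos] at hlt
  exact ⟨⟨hx, hxx₀⟩, hy,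
    (mul_rpow_mul_rpow_lt_iff ha hx hy.le hβ (hpos.trans hlt).le).1 hlt⟩

theorem volume_monomialSublevel_le (ha : 0 < a) (hx₀ : 0 ≤ x₀) (hβ : 0 < β) (hαβ : α < β)
    (hε : 0 ≤ ε) :
    volume (monomialSublevel a m x₀ α β ε) ≤
      ENNReal.ofReal ((ε / a) ^ β⁻¹ * x₀ ^ ((β - α) / β) * (β / (β - α))) := by
  have hexp : -(α / β) + 1 = (β - α) / β := by field_simp; ring
  have hr : -1 < -(α / β) := by
    rw [neg_lt_neg_iff, div_lt_one hβ]; exact hαβ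
  calc volume (monomialSublevel a m x₀ α β ε)
      ≤ volume (regionBetween 0 (fun x => (ε / a) ^ β⁻¹ * x ^ (-(α / β))) (Ioo 0 x₀)) :=
        measure_mono (monomialSublevel_subset_regionBetween ha hβ)
    _ = _ := by
        rw [volume_regionBetween_zero_mul_rpow (by positivity) hr hx₀, hexp]
        congr 1
        field_simp

theorem Ioo_prod_Ioo_subset_monomialSublevel {x₁ : ℝ} (ha : 0 < a) (hm : 0 ≤ m) (hα : 0 ≤ α)
    (hβ : 0 < β) (hε : 0 ≤ ε) (hx₁ : 0 ≤ x₁)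
    (hheight : (ε / a) ^ β⁻¹ * x₀ ^ (-(α / β)) ≤ x₁ ^ m) :
    Ioo x₁ x₀ ×ˢ Ioo 0 ((ε / a) ^ β⁻¹ * x₀ ^ (-(α / β))) ⊆ monomialSublevel a m x₀ α β ε := by
  rintro ⟨x, y⟩ ⟨⟨hx₁x, hxx₀⟩, hy, hyε⟩
  have hx : 0 < x := hx₁.trans_lt hx₁x
  have hpos : 0 < a * x ^ α * y ^ β := by
    have := Real.rpow_pos_of_pos hx α; have := Real.rpow_pos_of_pos hy β; positivity
  refine ⟨⟨hx, hxx₀, hy, ?_⟩, ?_⟩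
  · calc y < _ := hyε
      _ ≤ x₁ ^ m := hheight
      _ ≤ x ^ m := Real.rpow_le_rpow hx₁ hx₁x.le hm
  · rw [abs_of_pos hpos, mul_rpow_mul_rpow_lt_iff ha hx hy.le hβ hε]
    calc y < _ := hyε
      _ ≤ (ε / a) ^ β⁻¹ * x ^ (-(α / β)) := by
        gcongr ?_ * ?_
        exact Real.rpow_le_rpow_of_nonpos hx hxx₀.le (neg_nonpos.2 (div_nonneg hα hβ.le))

theorem volume_monomialSublevel_ge (ha : 0 < a) (hm : 0 ≤ m) (hx₀ : 0 < x₀) (hα : 0 ≤ α)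
    (hβ : 0 < β) (hε : 0 ≤ ε)
    (hheight : (ε / a) ^ β⁻¹ * x₀ ^ (-(α / β)) ≤ (x₀ / 2) ^ m) :
    ENNReal.ofReal ((ε / a) ^ β⁻¹ * x₀ ^ ((β - α) / β) / 2) ≤
      volume (monomialSublevel a m x₀ α β ε) := by
  have hexp : (β - α) / β = -(α / β) + 1 := by field_simp; ring
  calc ENNReal.ofReal ((ε / a) ^ β⁻¹ * x₀ ^ ((β - α) / β) / 2)
      = volume (Ioo (x₀ / 2) x₀ ×ˢ Ioo 0 ((ε / a) ^ β⁻¹ * x₀ ^ (-(α / β)))) := by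
        rw [Measure.volume_eq_prod, Measure.prod_prod, Real.volume_Ioo, Real.volume_Ioo,
          ← ENNReal.ofReal_mul (by linarith), hexp, Real.rpow_add_one hx₀.ne']
        congr 1
        ring
    _ ≤ _ := measure_mono
        (Ioo_prod_Ioo_subset_monomialSublevel ha hm hα hβ hε (by positivity) hheight)

end

theorem eventually_div_rpow_mul_le (a c : ℝ) {β d : ℝ} (hβ : 0 < β) (hd : 0 < d) :
    ∀ᶠ ε in 𝓝[>] 0, (ε / a) ^ β⁻¹ * c ≤ d := by
  have hcont : Continuous fun ε : ℝ => (ε / a) ^ β⁻¹ * c :=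
    ((continuous_id.div_const a).rpow_const fun _ => Or.inr (inv_nonneg.2 hβ.le)).mul
      continuous_const
  have hzero : (fun ε : ℝ => (ε / a) ^ β⁻¹ * c) 0 < d := by
    simpa [Real.zero_rpow (inv_ne_zero hβ.ne')] using hd
  exact nhdsWithin_le_nhds ((hcont.tendsto 0).eventually (eventually_le_nhds hzero))

/-- Lemma 2.3 a): for `β > α ≥ 0`, the area of the sublevel set of `h(x,y) = a x^α y^β`
on the curved triangle `{0 < x < x₀, 0 < y < x^m}` is comparable to
`x₀^((β-α)/β) * ε^(1/β)` for small `ε`. -/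
theorem monomial_sublevel_beta_gt_alpha
    (a m x₀ α β : ℝ) (ha : 0 < a) (hm : 0 < m) (hx₀ : 0 < x₀)
    (hα : 0 ≤ α) (hβ : α < β) :
    ∃ c C : ℝ, 0 < c ∧ 0 < C ∧ ∃ ε₀ > 0, ∀ ε : ℝ, 0 < ε → ε < ε₀ →
      c * x₀ ^ ((β - α) / β) * ε ^ (1 / β) <
        (volume {p : ℝ × ℝ | (0 < p.1 ∧ p.1 < x₀ ∧ 0 < p.2 ∧ p.2 < p.1 ^ m) ∧
          |a * p.1 ^ α * p.2 ^ β| < ε}).toReal ∧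
      (volume {p : ℝ × ℝ | (0 < p.1 ∧ p.1 < x₀ ∧ 0 < p.2 ∧ p.2 < p.1 ^ m) ∧
          |a * p.1 ^ α * p.2 ^ β| < ε}).toReal <
        C * x₀ ^ ((β - α) / β) * ε ^ (1 / β) := by
  have hβ₀ : 0 < β := hα.trans_lt hβ
  obtain ⟨ε₀, hε₀, hsmall⟩ := mem_nhdsGT_iff_exists_Ioo_subset.1 <|
    eventually_div_rpow_mul_le a (x₀ ^ (-(α / β))) hβ₀ (Real.rpow_pos_of_pos (half_pos hx₀) m)
  refine ⟨1 / (4 * a ^ (1 / β)), 2 * β / ((β - α) * a ^ (1 / β)), by positivity,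
    div_pos (by positivity) (mul_pos (by linarith) (by positivity)), ε₀, hε₀,
    fun ε hε hεε₀ => ?_⟩
  change _ < (volume (monomialSublevel a m x₀ α β ε)).toReal ∧
    (volume (monomialSublevel a m x₀ α β ε)).toReal < _
  have hupper := volume_monomialSublevel_le (m := m) ha hx₀.le hβ₀ hβ hε.le
  have hlower := volume_monomialSublevel_ge ha hm.le hx₀ hα hβ₀ hε.le (hsmall ⟨hε, hεε₀⟩)
  set K := (ε / a) ^ β⁻¹ * x₀ ^ ((β - α) / β) with hK
  have hKpos : 0 < K := by positivity
  have hXE : x₀ ^ ((β - α) / β) * ε ^ (1 / β) = a ^ (1 / β) * K := by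
    rw [hK, Real.div_rpow hε.le ha.le, one_div]
    field_simp
  rw [ENNReal.ofReal_le_iff_le_toReal (ne_top_of_le_ne_top ENNReal.ofReal_ne_top hupper)]
    at hlower
  replace hupper := ENNReal.toReal_le_of_le_ofReal (by positivity) hupper
  have hratio : 0 < β / (β - α) := div_pos hβ₀ (by linarith)
  constructor
  · calc _ = K / 4 := by rw [mul_assoc, hXE]; field_simp
      _ < _ := by linarith
  · calc _ < K * (β / (β - α)) * 2 := by linarith [mul_pos hKpos hratio]
      _ = _ := by rw [mul_assoc (2 * β / _), hXE]; field_simp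
end

section
/- Let a > 0, m > 0, x₀ > 0 and β = α > 0. Let A = {(x,y) : 0 < x < x₀, 0 < y < x^m} and h(x,y) = a·x^α·y^β. Then there exist constants c, C > 0 such that for all sufficiently small ε > 0: c·ε^(1/β)·|log ε| < |{(x,y) ∈ A : |h(x,y)| < ε}| < C·ε^(1/β)·|log ε|. -/
/-!
With `t = (ε / a) ^ (1 / β)`, on the positive quadrant `|a x^β y^β| < ε` is just `x y < t`, so
the sublevel set is the region under `min (x ^ m) (t / x)` over `(0, x₀)`. The two graphs cross at
`s = t ^ (1 / (m + 1))`, and the area is `∫₀ˢ x^m + ∫ₛ^x₀ t / x = t (1 / (m + 1) + log (x₀ / s))`.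
Since `log (1 / s)` is `|log ε| / (β (m + 1))` up to a constant, the area is `≍ ε^(1/β) |log ε|`.
-/

open MeasureTheory Set Filter Topology

lemma abs_mul_rpow_mul_rpow_lt_iff {a β ε x y : ℝ} (ha : 0 < a) (hβ : 0 < β) (hε : 0 < ε)
    (hx : 0 < x) (hy : 0 < y) :
    |a * x ^ β * y ^ β| < ε ↔ x * y < (ε / a) ^ (1 / β) := by
  have hxy : a * x ^ β * y ^ β = a * (x * y) ^ β := by rw [Real.mul_rpow hx.le hy.le]; ring
  rw [hxy, abs_of_pos (by positivity), ← lt_div_iff₀' ha, one_div,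
    Real.lt_rpow_inv_iff_of_pos (by positivity) (div_pos hε ha).le hβ]

section MinRpowInv

variable {m t x : ℝ}

lemma min_rpow_mul_inv_of_rpow_le (hx : 0 < x) (h : x ^ (m + 1) ≤ t) :
    min (x ^ m) (t * x⁻¹) = x ^ m :=
  min_eq_left <| (le_mul_inv_iff₀ hx).2 <| by rwa [← Real.rpow_add_one hx.ne']

lemma min_rpow_mul_inv_of_le_rpow (hx : 0 < x) (h : t ≤ x ^ (m + 1)) :
    min (x ^ m) (t * x⁻¹) = t * x⁻¹ :=
  min_eq_right <| (mul_inv_le_iff₀ hx).2 <| by rwa [← Real.rpow_add_one hx.ne']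

lemma intervalIntegrable_min_rpow_mul_inv (hm : -1 < m) (ht : 0 ≤ t) {a b : ℝ} (ha : 0 ≤ a)
    (hb : 0 ≤ b) : IntervalIntegrable (fun x ↦ min (x ^ m) (t * x⁻¹)) volume a b := by
  refine (intervalIntegral.intervalIntegrable_rpow' hm).mono_fun (by fun_prop) ?_
  refine (ae_restrict_iff' measurableSet_uIoc).2 (Eventually.of_forall fun x hx ↦ ?_)
  have hx0 : 0 < x := (le_min ha hb).trans_lt hx.1
  beta_reduce
  rw [Real.norm_of_nonneg (le_min (by positivity) (by positivity)),
    Real.norm_of_nonneg (by positivity)]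
  exact min_le_left _ _

theorem integral_min_rpow_mul_inv (hm : -1 < m) (ht : 0 < t) {x₀ : ℝ} (hx₀ : 0 < x₀)
    (htx₀ : t ≤ x₀ ^ (m + 1)) :
    ∫ x in 0..x₀, min (x ^ m) (t * x⁻¹) =
      t * (1 / (m + 1) + Real.log x₀ - Real.log t / (m + 1)) := by
  have hm1 : 0 < m + 1 := by linarith
  set s := t ^ (1 / (m + 1)) with hs
  have hs_pos : 0 < s := by positivity
  have hs_pow : s ^ (m + 1) = t := by
    rw [← Real.rpow_mul ht.le, one_div_mul_cancel hm1.ne', Real.rpow_one]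
  have hsx₀ : s ≤ x₀ :=
    calc s ≤ (x₀ ^ (m + 1)) ^ (1 / (m + 1)) := Real.rpow_le_rpow ht.le htx₀ (by positivity)
      _ = x₀ := by rw [← Real.rpow_mul hx₀.le, mul_one_div_cancel hm1.ne', Real.rpow_one]
  have h_left : ∫ x in 0..s, min (x ^ m) (t * x⁻¹) = t / (m + 1) := by
    rw [intervalIntegral.integral_congr_ae (g := fun x ↦ x ^ m) ?_, integral_rpow (Or.inl hm),
      Real.zero_rpow hm1.ne', sub_zero, hs_pow]
    refine Eventually.of_forall fun x hx ↦ ?_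
    rw [uIoc_of_le hs_pos.le] at hx
    exact min_rpow_mul_inv_of_rpow_le hx.1 (hs_pow ▸ Real.rpow_le_rpow hx.1.le hx.2 hm1.le)
  have h_right : ∫ x in s..x₀, min (x ^ m) (t * x⁻¹) =
      t * (Real.log x₀ - Real.log t / (m + 1)) := by
    rw [intervalIntegral.integral_congr_ae (g := fun x ↦ t * x⁻¹) ?_,
      intervalIntegral.integral_const_mul, integral_inv ?_, Real.log_div hx₀.ne' hs_pos.ne', hs,
      Real.log_rpow ht, one_div_mul_eq_div]
    · rw [uIcc_of_le hsx₀]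
      exact fun h ↦ hs_pos.not_ge h.1
    refine Eventually.of_forall fun x hx ↦ ?_
    rw [uIoc_of_le hsx₀] at hx
    have hx0 : 0 < x := hs_pos.trans hx.1
    exact min_rpow_mul_inv_of_le_rpow hx0 (hs_pow ▸ Real.rpow_le_rpow hs_pos.le hx.1.le hm1.le)
  rw [← intervalIntegral.integral_add_adjacent_intervals
    (intervalIntegrable_min_rpow_mul_inv hm ht.le le_rfl hs_pos.le)
    (intervalIntegrable_min_rpow_mul_inv hm ht.le hs_pos.le hx₀.le), h_left, h_right]
  ring

end MinRpowInv

theorem volume_curvedTriangle_mul_lt {m x₀ t : ℝ} (hm : -1 < m) (hx₀ : 0 < x₀) (ht : 0 < t)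
    (htx₀ : t ≤ x₀ ^ (m + 1)) :
    volume {p : ℝ × ℝ | (0 < p.1 ∧ p.1 < x₀ ∧ 0 < p.2 ∧ p.2 < p.1 ^ m) ∧ p.1 * p.2 < t} =
      ENNReal.ofReal (t * (1 / (m + 1) + Real.log x₀ - Real.log t / (m + 1))) := by
  have hset : {p : ℝ × ℝ | (0 < p.1 ∧ p.1 < x₀ ∧ 0 < p.2 ∧ p.2 < p.1 ^ m) ∧ p.1 * p.2 < t} =
      regionBetween (fun _ ↦ 0) (fun x ↦ min (x ^ m) (t * x⁻¹)) (Ioo 0 x₀) := by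
    ext ⟨x, y⟩
    simp only [regionBetween, mem_ofPred_eq, mem_Ioo, lt_min_iff]
    constructor
    · rintro ⟨⟨hx, hxx₀, hy, hym⟩, hxy⟩
      exact ⟨⟨hx, hxx₀⟩, hy, hym, (lt_mul_inv_iff₀ hx).2 (by linarith)⟩
    · rintro ⟨⟨hx, hxx₀⟩, hy, hym, hyt⟩
      exact ⟨⟨hx, hxx₀, hy, hym⟩, by linarith [(lt_mul_inv_iff₀ hx).1 hyt]⟩
  have hint : IntegrableOn (fun x ↦ min (x ^ m) (t * x⁻¹)) (Ioo 0 x₀) :=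
    ((intervalIntegrable_min_rpow_mul_inv hm ht.le le_rfl hx₀.le).1).mono_set Ioo_subset_Ioc_self
  rw [hset, Measure.volume_eq_prod, volume_regionBetween_eq_integral integrableOn_zero hint
    measurableSet_Ioo fun x hx ↦ le_min (by simpa using Real.rpow_nonneg hx.1.le m)
      (by simpa using mul_nonneg ht.le (inv_nonneg.2 hx.1.le)),
    ← integral_min_rpow_mul_inv hm ht hx₀ htx₀, intervalIntegral.integral_of_le hx₀.le,
    integral_Ioc_eq_integral_Ioo]
  simp

theorem volume_monomial_sublevel_eq {a m x₀ β ε : ℝ} (ha : 0 < a) (hm : -1 < m) (hx₀ : 0 < x₀)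
    (hβ : 0 < β) (hε : 0 < ε) (hεx₀ : ε ≤ a * x₀ ^ (β * (m + 1))) :
    volume {p : ℝ × ℝ | (0 < p.1 ∧ p.1 < x₀ ∧ 0 < p.2 ∧ p.2 < p.1 ^ m) ∧
        |a * p.1 ^ β * p.2 ^ β| < ε} =
      ENNReal.ofReal ((ε / a) ^ (1 / β) * (1 / (m + 1) + Real.log x₀ +
        Real.log a / (β * (m + 1)) - Real.log ε / (β * (m + 1)))) := by
  have htx₀ : (ε / a) ^ (1 / β) ≤ x₀ ^ (m + 1) :=
    calc (ε / a) ^ (1 / β) ≤ (x₀ ^ (β * (m + 1))) ^ (1 / β) :=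
          Real.rpow_le_rpow (div_pos hε ha).le ((div_le_iff₀' ha).2 hεx₀) (by positivity)
      _ = x₀ ^ (m + 1) := by
          rw [← Real.rpow_mul hx₀.le, mul_comm β, mul_assoc, mul_one_div_cancel hβ.ne', mul_one]
  have hset : {p : ℝ × ℝ | (0 < p.1 ∧ p.1 < x₀ ∧ 0 < p.2 ∧ p.2 < p.1 ^ m) ∧
      |a * p.1 ^ β * p.2 ^ β| < ε} = {p : ℝ × ℝ | (0 < p.1 ∧ p.1 < x₀ ∧ 0 < p.2 ∧ p.2 < p.1 ^ m) ∧
      p.1 * p.2 < (ε / a) ^ (1 / β)} :=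
    Set.ext fun p ↦ and_congr_right fun hp ↦
      abs_mul_rpow_mul_rpow_lt_iff ha hβ hε hp.1 hp.2.2.1
  rw [hset, volume_curvedTriangle_mul_lt hm hx₀ (by positivity) htx₀,
    Real.log_rpow (div_pos hε ha), Real.log_div hε.ne' ha.ne']
  congr 2
  field_simp
  ring

lemma eventually_div_two_lt_add_div_lt (K : ℝ) {D : ℝ} (hD : 0 < D) :
    ∀ᶠ L in atTop, L / (2 * D) < K + L / D ∧ K + L / D < 2 * L / D := by
  filter_upwards [eventually_gt_atTop (2 * D * |K|)] with L hL
  have hLD : 2 * |K| < L / D := by rw [lt_div_iff₀ hD]; linarith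
  have h_half : L / (2 * D) = L / D / 2 := by ring
  have h_double : 2 * L / D = 2 * (L / D) := by ring
  rw [h_half, h_double]
  constructor <;> linarith [le_abs_self K, neg_abs_le K]

/-- Lemma 2.3 b): for `β = α > 0`, the area of the sublevel set of `h(x,y) = a x^β y^β`
on the curved triangle `{0 < x < x₀, 0 < y < x^m}` is comparable to
`ε^(1/β) * |log ε|` for small `ε`. -/
theorem monomial_sublevel_beta_eq_alpha
    (a m x₀ β : ℝ) (ha : 0 < a) (hm : 0 < m) (hx₀ : 0 < x₀) (hβ : 0 < β) :
    ∃ c C : ℝ, 0 < c ∧ 0 < C ∧ ∃ ε₀ > 0, ∀ ε : ℝ, 0 < ε → ε < ε₀ →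
      c * ε ^ (1 / β) * |Real.log ε| <
        (volume {p : ℝ × ℝ | (0 < p.1 ∧ p.1 < x₀ ∧ 0 < p.2 ∧ p.2 < p.1 ^ m) ∧
          |a * p.1 ^ β * p.2 ^ β| < ε}).toReal ∧
      (volume {p : ℝ × ℝ | (0 < p.1 ∧ p.1 < x₀ ∧ 0 < p.2 ∧ p.2 < p.1 ^ m) ∧
          |a * p.1 ^ β * p.2 ^ β| < ε}).toReal <
        C * ε ^ (1 / β) * |Real.log ε| := by
  set D := β * (m + 1)
  set K := 1 / (m + 1) + Real.log x₀ + Real.log a / D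
  set A := a ^ (1 / β)
  have hD : 0 < D := by positivity
  have hA : 0 < A := by positivity
  refine ⟨1 / (2 * D * A), 2 / (D * A), by positivity, by positivity, ?_⟩
  have hev : ∀ᶠ ε in 𝓝[>] 0, (ε < 1 ∧ ε < a * x₀ ^ D) ∧
      |Real.log ε| / (2 * D) < K + |Real.log ε| / D ∧ K + |Real.log ε| / D < 2 * |Real.log ε| / D :=
    (eventually_of_mem (Ioo_mem_nhdsGT (lt_min one_pos (by positivity : 0 < a * x₀ ^ D)))
      fun ε hε ↦ lt_min_iff.1 hε.2).and
      ((tendsto_abs_atBot_atTop.comp Real.tendsto_log_nhdsGT_zero).eventually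
        (eventually_div_two_lt_add_div_lt K hD))
  obtain ⟨ε₀, hε₀, hε₀_spec⟩ := (nhdsGT_basis 0).eventually_iff.1 hev
  refine ⟨ε₀, hε₀, fun ε hε hεε₀ ↦ ?_⟩
  obtain ⟨⟨hε1, hεx₀⟩, h_lower, h_upper⟩ := hε₀_spec ⟨hε, hεε₀⟩
  have h_log : K - Real.log ε / D = K + |Real.log ε| / D := by
    rw [abs_of_neg (Real.log_neg hε hε1)]; ring
  have h_area : (ε / a) ^ (1 / β) = ε ^ (1 / β) / A := Real.div_rpow hε.le ha.le _
  have hE : 0 < ε ^ (1 / β) / A := by positivity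
  rw [volume_monomial_sublevel_eq ha (by linarith) hx₀ hβ hε hεx₀.le, h_log, h_area,
    ENNReal.toReal_ofReal (mul_nonneg hE.le ((by positivity : (0 : ℝ) ≤ _).trans h_lower.le))]
  constructor
  · calc 1 / (2 * D * A) * ε ^ (1 / β) * |Real.log ε|
          = ε ^ (1 / β) / A * (|Real.log ε| / (2 * D)) := by field_simp
      _ < _ := mul_lt_mul_of_pos_left h_lower hE
  · calc _ < ε ^ (1 / β) / A * (2 * |Real.log ε| / D) := mul_lt_mul_of_pos_left h_upper hE
      _ = 2 / (D * A) * ε ^ (1 / β) * |Real.log ε| := by field_simp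
end

section
/- Let a > 0, m > 0, N > 0, x₀ > 0 and let 0 ≤ β < α be real numbers. Let A = {(x,y) : 0 < x < x₀, 0 < y < N·x^m} and h(x,y) = a·x^α·y^β. Then there exist constants c, C > 0 (depending on a, m, α, β) such that for all sufficiently small ε > 0: c·N^((α-β)/(α+mβ))·ε^((m+1)/(α+mβ)) < |{(x,y) ∈ A : |h(x,y)| < ε}| < C·N^((α-β)/(α+mβ))·ε^((m+1)/(α+mβ)). -/
/-!
The anisotropic scaling `(u, v) ↦ (t u, N t^m v)`, with `t` defined by `a N^β t^(α+mβ) = ε`,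
maps the normalized set `{0 < u < x₀/t, 0 < v < u^m, u^α v^β < 1}` onto the sublevel set and
multiplies areas by `N t^(m+1)`, which equals `a^(-s) N^((α-β)/(α+mβ)) ε^s` with
`s = (m+1)/(α+mβ)`. For small `ε` we have `x₀/t ≥ 1`, so the normalized area lies between its
positive value at `x₀/t = 1` and the uniform bound `α/(α-β)`: beyond `u = 1` the normalized set
is empty if `β = 0` and lies under the graph of `u^(-α/β)` if `β > 0`, which is integrable on
`(1, ∞)` exactly because `β < α`.
-/

open MeasureTheory Set

theorem Real.volume_preimage_prodMap_mul {a b : ℝ} (ha : a ≠ 0) (hb : b ≠ 0) (s : Set (ℝ × ℝ)) :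
    volume (Prod.map (a * ·) (b * ·) ⁻¹' s) = ENNReal.ofReal |(a * b)⁻¹| * volume s := by
  let f : ℝ × ℝ →ₗ[ℝ] ℝ × ℝ := (a • LinearMap.id).prodMap (b • LinearMap.id)
  have hf : LinearMap.det f = a * b := by simp [f, LinearMap.det_prodMap]
  rw [← hf, ← Measure.addHaar_preimage_linearMap _ (hf ▸ mul_ne_zero ha hb)]
  rfl

theorem volume_regionBetween_rpow_Ioi_one {p : ℝ} (hp : p < -1) :
    volume (regionBetween (fun _ => 0) (fun u => u ^ p) (Ioi 1)) =
      ENNReal.ofReal (-1 / (p + 1)) := by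
  rw [Measure.volume_eq_prod, volume_regionBetween_eq_integral integrableOn_zero
    (integrableOn_Ioi_rpow_of_lt hp one_pos) measurableSet_Ioi
    fun u hu => Real.rpow_nonneg (zero_le_one.trans (le_of_lt hu)) p]
  simp [integral_Ioi_rpow_of_lt hp one_pos]

theorem exists_pos_lt_mul_rpow_eq {k σ ε x₀ : ℝ} (hk : 0 < k) (hσ : 0 < σ) (hε : 0 < ε)
    (hx₀ : 0 ≤ x₀) (hlt : ε < k * x₀ ^ σ) : ∃ t, 0 < t ∧ t < x₀ ∧ k * t ^ σ = ε := by
  have hεk : 0 ≤ ε / k := by positivity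
  refine ⟨(ε / k) ^ σ⁻¹, by positivity, ?_, ?_⟩
  · rw [Real.rpow_inv_lt_iff_of_pos hεk hx₀ hσ, div_lt_iff₀' hk]
    exact hlt
  · rw [Real.rpow_inv_rpow hεk hσ.ne', mul_div_cancel₀ _ hk.ne']

theorem rpow_neg_mul_rpow_mul_rpow_eq_mul_rpow {a N t m α β : ℝ} (ha : 0 < a) (hN : 0 < N)
    (ht : 0 < t) (hσ : α + m * β ≠ 0) :
    a ^ (-((m + 1) / (α + m * β))) * N ^ ((α - β) / (α + m * β)) *
        (a * N ^ β * t ^ (α + m * β)) ^ ((m + 1) / (α + m * β)) = N * t ^ (m + 1) := by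
  set σ := α + m * β
  set s := (m + 1) / σ
  have hNexp : (α - β) / σ + β * s = 1 := by
    rw [← div_self hσ]; simp only [σ, s]; ring
  have htexp : σ * s = m + 1 := mul_div_cancel₀ _ hσ
  rw [Real.mul_rpow (by positivity) (by positivity), Real.mul_rpow ha.le (by positivity),
    ← Real.rpow_mul hN.le, ← Real.rpow_mul ht.le, htexp, Real.rpow_neg ha.le]
  calc (a ^ s)⁻¹ * N ^ ((α - β) / σ) * (a ^ s * N ^ (β * s) * t ^ (m + 1))
      = (a ^ s)⁻¹ * a ^ s * (N ^ ((α - β) / σ) * N ^ (β * s)) * t ^ (m + 1) := by ring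
    _ = N * t ^ (m + 1) := by
      rw [inv_mul_cancel₀ (by positivity), ← Real.rpow_add hN, hNexp, Real.rpow_one, one_mul]

def monomialSublevelSet (a m N x₀ α β ε : ℝ) : Set (ℝ × ℝ) :=
  {p | (0 < p.1 ∧ p.1 < x₀ ∧ 0 < p.2 ∧ p.2 < N * p.1 ^ m) ∧ |a * p.1 ^ α * p.2 ^ β| < ε}

theorem preimage_prodMap_mul_monomialSublevelSet {a N t : ℝ} (ha : 0 < a) (hN : 0 < N)
    (ht : 0 < t) (m x₀ α β : ℝ) :
    Prod.map (t * ·) (N * t ^ m * ·) ⁻¹'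
        monomialSublevelSet a m N x₀ α β (a * N ^ β * t ^ (α + m * β)) =
      monomialSublevelSet 1 m 1 (x₀ / t) α β 1 := by
  ext ⟨u, v⟩
  simp only [monomialSublevelSet, mem_preimage, Prod.map_apply, mem_ofPred_eq, one_mul]
  by_cases hu : 0 < u
  · by_cases hv : 0 < v
    · have hpow : (t * u) ^ m = t ^ m * u ^ m := Real.mul_rpow ht.le hu.le
      have hval : a * (t * u) ^ α * (N * t ^ m * v) ^ β =
          a * N ^ β * t ^ (α + m * β) * (u ^ α * v ^ β) := by
        rw [Real.mul_rpow ht.le hu.le, Real.mul_rpow (by positivity) hv.le,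
          Real.mul_rpow hN.le (by positivity), ← Real.rpow_mul ht.le, Real.rpow_add ht]
        ring
      rw [hpow, hval, abs_of_pos (by positivity), abs_of_pos (by positivity),
        mul_lt_iff_lt_one_right (by positivity), lt_div_iff₀' ht, mul_assoc,
        mul_lt_mul_iff_right₀ hN, mul_lt_mul_iff_right₀ (by positivity)]
      simp [hu, hv, ht, hN, Real.rpow_pos_of_pos ht m]
    · have : ¬ 0 < N * t ^ m * v :=
        not_lt.mpr (mul_nonpos_of_nonneg_of_nonpos (by positivity) (not_lt.mp hv))
      simp [hv, this]
  · simp [hu, ht]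

theorem volume_monomialSublevelSet {a N t : ℝ} (ha : 0 < a) (hN : 0 < N) (ht : 0 < t)
    (m x₀ α β : ℝ) :
    volume (monomialSublevelSet a m N x₀ α β (a * N ^ β * t ^ (α + m * β))) =
      ENNReal.ofReal (N * t ^ (m + 1)) * volume (monomialSublevelSet 1 m 1 (x₀ / t) α β 1) := by
  have hscale : t * (N * t ^ m) = N * t ^ (m + 1) := by
    rw [Real.rpow_add_one ht.ne']; ring
  have hpos : 0 < N * t ^ (m + 1) := by positivity
  rw [← preimage_prodMap_mul_monomialSublevelSet ha hN ht,
    Real.volume_preimage_prodMap_mul ht.ne' (by positivity), hscale, abs_of_pos (inv_pos.2 hpos),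
    ← mul_assoc, ← ENNReal.ofReal_mul hpos.le, mul_inv_cancel₀ hpos.ne', ENNReal.ofReal_one,
    one_mul]

theorem monomialSublevelSet_mono (a m N α β ε : ℝ) :
    Monotone fun x₀ => monomialSublevelSet a m N x₀ α β ε :=
  fun _ _ h _ ⟨⟨hx, hx₀, hy⟩, hε⟩ => ⟨⟨hx, hx₀.trans_le h, hy⟩, hε⟩

theorem volume_monomialSublevelSet_one_pos {m α β : ℝ} (hm : 0 ≤ m) (hα : 0 < α) (hβ : 0 ≤ β) :
    0 < volume (monomialSublevelSet 1 m 1 1 α β 1) := by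
  have hrect : Ioo (1 / 2) 1 ×ˢ Ioo 0 ((1 / 2) ^ m) ⊆ monomialSublevelSet 1 m 1 1 α β 1 := by
    rintro ⟨u, v⟩ ⟨⟨hu, hu1⟩, hv, hvu⟩
    have hu0 : 0 < u := by linarith
    have hvu' : v < u ^ m := hvu.trans_le (Real.rpow_le_rpow (by norm_num) hu.le hm)
    have hv1 : v ≤ 1 := (hvu'.trans_le (Real.rpow_le_one hu0.le hu1.le hm)).le
    refine ⟨⟨hu0, hu1, hv, by rwa [one_mul]⟩, ?_⟩
    rw [one_mul, abs_of_pos (by positivity)]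
    exact mul_lt_one_of_nonneg_of_lt_one_left (by positivity) (Real.rpow_lt_one hu0.le hu1 hα)
      (Real.rpow_le_one hv.le hv1 hβ)
  refine lt_of_lt_of_le ?_ (measure_mono hrect)
  rw [Measure.volume_eq_prod, Measure.prod_prod, Real.volume_Ioo, Real.volume_Ioo]
  exact ENNReal.mul_pos (ENNReal.ofReal_pos.2 (by norm_num)).ne'
    (ENNReal.ofReal_pos.2 (by rw [sub_zero]; positivity)).ne'

theorem monomialSublevelSet_one_subset {m α β : ℝ} (hm : 0 ≤ m) (hβ : 0 < β) (R : ℝ) :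
    monomialSublevelSet 1 m 1 R α β 1 ⊆
      Ioc 0 1 ×ˢ Ioo 0 1 ∪ regionBetween (fun _ => 0) (fun u => u ^ (-(α / β))) (Ioi 1) := by
  rintro ⟨u, v⟩ ⟨⟨hu, -, hv, hvu⟩, hval⟩
  rw [one_mul] at hvu
  rw [one_mul, abs_of_pos (by positivity)] at hval
  rcases le_or_gt u 1 with hu1 | hu1
  · exact Or.inl ⟨⟨hu, hu1⟩, hv, hvu.trans_le (Real.rpow_le_one hu.le hu1 hm)⟩
  · refine Or.inr ⟨hu1, hv, ?_⟩
    have hvβ : v ^ β < (u ^ (-(α / β))) ^ β := by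
      rw [← Real.rpow_mul hu.le, neg_mul, div_mul_cancel₀ _ hβ.ne', Real.rpow_neg hu.le,
        inv_eq_one_div, lt_div_iff₀' (by positivity)]
      exact hval
    exact (Real.rpow_lt_rpow_iff hv.le (by positivity) hβ).1 hvβ

theorem volume_monomialSublevelSet_one_le {m α β : ℝ} (hm : 0 ≤ m) (hβ : 0 ≤ β) (hαβ : β < α)
    (R : ℝ) : volume (monomialSublevelSet 1 m 1 R α β 1) ≤ ENNReal.ofReal (α / (α - β)) := by
  have hα : 0 < α := hβ.trans_lt hαβ
  have hunit : volume (Ioc (0 : ℝ) 1 ×ˢ Ioo (0 : ℝ) 1) = 1 := by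
    rw [Measure.volume_eq_prod, Measure.prod_prod, Real.volume_Ioc, Real.volume_Ioo]
    simp
  rcases hβ.eq_or_lt with rfl | hβ
  · have hsub : monomialSublevelSet 1 m 1 R α 0 1 ⊆ Ioc 0 1 ×ˢ Ioo 0 1 := by
      rintro ⟨u, v⟩ ⟨⟨hu, -, hv, hvu⟩, hval⟩
      rw [one_mul] at hvu
      rw [Real.rpow_zero, mul_one, one_mul, abs_of_pos (by positivity)] at hval
      have hu1 : u ≤ 1 := not_lt.1 fun h => (Real.one_lt_rpow h hα).not_gt hval
      exact ⟨⟨hu, hu1⟩, hv, hvu.trans_le (Real.rpow_le_one hu.le hu1 hm)⟩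
    calc volume (monomialSublevelSet 1 m 1 R α 0 1) ≤ volume (Ioc (0 : ℝ) 1 ×ˢ Ioo (0 : ℝ) 1) :=
          measure_mono hsub
      _ = ENNReal.ofReal (α / (α - 0)) := by
          rw [hunit, sub_zero, div_self hα.ne', ENNReal.ofReal_one]
  · have hp : -(α / β) < -1 := neg_lt_neg ((one_lt_div hβ).2 hαβ)
    calc volume (monomialSublevelSet 1 m 1 R α β 1)
        ≤ volume (Ioc (0 : ℝ) 1 ×ˢ Ioo (0 : ℝ) 1 ∪
            regionBetween (fun _ => 0) (fun u => u ^ (-(α / β))) (Ioi 1)) :=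
          measure_mono (monomialSublevelSet_one_subset hm hβ R)
      _ ≤ 1 + ENNReal.ofReal (-1 / (-(α / β) + 1)) := by
          rw [← hunit, ← volume_regionBetween_rpow_Ioi_one hp]
          exact measure_union_le _ _
      _ = ENNReal.ofReal (α / (α - β)) := by
          rw [← ENNReal.ofReal_one, ← ENNReal.ofReal_add zero_le_one
            (div_nonneg_of_nonpos (by norm_num) (by linarith))]
          have hαβ' : α - β ≠ 0 := (sub_pos.2 hαβ).ne'
          have hp' : -(α / β) + 1 = -((α - β) / β) := by field_simp; ring
          rw [hp', neg_div_neg_eq, one_div_div]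
          congr 1
          field_simp
          ring

theorem exists_bounds_toReal_volume_monomialSublevelSet_one {m α β : ℝ} (hm : 0 ≤ m)
    (hβ : 0 ≤ β) (hαβ : β < α) :
    ∃ c > 0, ∀ R ≥ 1, c ≤ (volume (monomialSublevelSet 1 m 1 R α β 1)).toReal ∧
      (volume (monomialSublevelSet 1 m 1 R α β 1)).toReal ≤ α / (α - β) := by
  have hα : 0 < α := hβ.trans_lt hαβ
  have hfin (R : ℝ) : volume (monomialSublevelSet 1 m 1 R α β 1) ≠ ⊤ :=
    ne_top_of_le_ne_top ENNReal.ofReal_ne_top (volume_monomialSublevelSet_one_le hm hβ hαβ R)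
  refine ⟨_, ENNReal.toReal_pos (volume_monomialSublevelSet_one_pos hm hα hβ).ne' (hfin 1),
    fun R hR => ⟨?_, ?_⟩⟩
  · exact ENNReal.toReal_mono (hfin R) (measure_mono (monomialSublevelSet_mono _ _ _ _ _ _ hR))
  · exact ENNReal.toReal_le_of_le_ofReal (div_nonneg hα.le (sub_pos.2 hαβ).le)
      (volume_monomialSublevelSet_one_le hm hβ hαβ R)

/-- Lemma 2.3 c): for `0 ≤ β < α`, the area of the sublevel set of `h(x,y) = a x^α y^β`
on the curved triangle `{0 < x < x₀, 0 < y < N x^m}` is comparable to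
`N^((α-β)/(α+mβ)) * ε^((m+1)/(α+mβ))` for small `ε`. -/
theorem monomial_sublevel_beta_lt_alpha
    (a m N x₀ α β : ℝ) (ha : 0 < a) (hm : 0 < m) (hN : 0 < N) (hx₀ : 0 < x₀)
    (hβ : 0 ≤ β) (hαβ : β < α) :
    ∃ c C : ℝ, 0 < c ∧ 0 < C ∧ ∃ ε₀ > 0, ∀ ε : ℝ, 0 < ε → ε < ε₀ →
      c * N ^ ((α - β) / (α + m * β)) * ε ^ ((m + 1) / (α + m * β)) <
        (volume {p : ℝ × ℝ | (0 < p.1 ∧ p.1 < x₀ ∧ 0 < p.2 ∧ p.2 < N * p.1 ^ m) ∧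
          |a * p.1 ^ α * p.2 ^ β| < ε}).toReal ∧
      (volume {p : ℝ × ℝ | (0 < p.1 ∧ p.1 < x₀ ∧ 0 < p.2 ∧ p.2 < N * p.1 ^ m) ∧
          |a * p.1 ^ α * p.2 ^ β| < ε}).toReal <
        C * N ^ ((α - β) / (α + m * β)) * ε ^ ((m + 1) / (α + m * β)) := by
  have hα : 0 < α := hβ.trans_lt hαβ
  have hσ : 0 < α + m * β := by positivity
  obtain ⟨c₁, hc₁, hbounds⟩ := exists_bounds_toReal_volume_monomialSublevelSet_one hm.le hβ hαβ
  refine ⟨a ^ (-((m + 1) / (α + m * β))) * (c₁ / 2),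
    a ^ (-((m + 1) / (α + m * β))) * (α / (α - β) + 1), by positivity,
    by have := div_pos hα (sub_pos.2 hαβ); positivity, a * N ^ β * x₀ ^ (α + m * β),
    by positivity, fun ε hε hεlt => ?_⟩
  obtain ⟨t, ht, htx₀, rfl⟩ := exists_pos_lt_mul_rpow_eq (by positivity) hσ hε hx₀.le hεlt
  obtain ⟨hlower, hupper⟩ := hbounds (x₀ / t) ((one_le_div ht).2 htx₀.le)
  have hscale := rpow_neg_mul_rpow_mul_rpow_eq_mul_rpow ha hN ht (m := m) (α := α) (β := β) hσ.ne'
  have hX : 0 < N * t ^ (m + 1) := by positivity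
  change _ < (volume (monomialSublevelSet a m N x₀ α β _)).toReal ∧
    (volume (monomialSublevelSet a m N x₀ α β _)).toReal < _
  rw [volume_monomialSublevelSet ha hN ht, ENNReal.toReal_mul, ENNReal.toReal_ofReal hX.le]
  constructor
  · calc _ = c₁ / 2 * (N * t ^ (m + 1)) := by rw [← hscale]; ring
      _ < _ := by rw [mul_comm]; gcongr; linarith
  · calc _ < N * t ^ (m + 1) * (α / (α - β) + 1) := by gcongr; linarith
      _ = _ := by rw [← hscale]; ring
end

section
/- Let R(x,y) be a smooth function near (0,0) whose Newton polygon has a vertex (c,0) on the a-axis which is the intersection of the horizontal ray with a compact edge of equation a + m·b = α, and let r_{c0} ≠ 0 be the corresponding Taylor coefficient. Then for every δ > 0 there exist r > 0 and ξ > 0 such that for all (x,y) with 0 < x < r and 0 < y < ξ·x^m, one has |R(x,y) − r_{c0}·x^c| < δ·|r_{c0}|·x^c. -/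
open Set

lemma partialY_smooth (R : ℝ → ℝ → ℝ)
    (hR : ContDiff ℝ (⊤ : ℕ∞) (fun p : ℝ × ℝ => R p.1 p.2)) (b : ℕ) :
    ContDiff ℝ (⊤ : ℕ∞) (fun p : ℝ × ℝ => iteratedDeriv b (fun y => R p.1 y) p.2) := by
  induction b with
  | zero => simpa [iteratedDeriv_zero] using hR
  | succ b ih =>
      have h1 : (fun p : ℝ × ℝ => iteratedDeriv (b+1) (fun y => R p.1 y) p.2)
          = fun p : ℝ × ℝ =>
            fderiv ℝ (fun y => iteratedDeriv b (fun y' => R p.1 y') y) p.2 1 := by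
        funext p
        rw [iteratedDeriv_succ, ← fderiv_apply_one_eq_deriv]
      rw [h1]
      have hunc : ContDiff ℝ (⊤ : ℕ∞) (Function.uncurry
          (fun (p : ℝ × ℝ) (y : ℝ) => iteratedDeriv b (fun y' => R p.1 y') y)) := by
        have : ContDiff ℝ (⊤ : ℕ∞) (fun q : (ℝ × ℝ) × ℝ => (q.1.1, q.2)) :=
          (contDiff_fst.comp contDiff_fst).prodMk contDiff_snd
        exact ih.comp this
      exact ContDiff.fderiv_apply hunc contDiff_snd contDiff_const (by simp)

lemma iDW_eq (f : ℝ → ℝ) (hf : ContDiff ℝ (⊤ : ℕ∞) f) (n : ℕ) :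
    ∀ x ∈ Icc (0:ℝ) 1, iteratedDerivWithin n f (Icc 0 1) x = iteratedDeriv n f x := by
  induction n with
  | zero => intro x hx; simp [iteratedDerivWithin_zero, iteratedDeriv_zero]
  | succ n ih =>
      intro x hx
      rw [iteratedDerivWithin_succ, iteratedDeriv_succ,
        derivWithin_congr ih (ih x hx)]
      exact DifferentiableAt.derivWithin
        ((hf.differentiable_iteratedDeriv n
          (by exact_mod_cast lt_top_iff_ne_top.2 (by simp))).differentiableAt)
        ((uniqueDiffOn_Icc one_pos) x hx)

lemma taylor_bound' (f : ℝ → ℝ) (hf : ContDiff ℝ (⊤ : ℕ∞) f) (n : ℕ) (C : ℝ)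
    (hC : ∀ t ∈ Icc (0:ℝ) 1, |iteratedDeriv (n+1) f t| ≤ C) (x : ℝ) (hx : x ∈ Icc (0:ℝ) 1) :
    |f x - ∑ k ∈ Finset.range (n+1), ((k.factorial:ℝ)⁻¹ * x^k) * iteratedDeriv k f 0|
      ≤ C * x^(n+1) := by
  have h0 : (0:ℝ) ∈ Icc (0:ℝ) 1 := by norm_num
  have hfO : ContDiffOn ℝ (n+1 : ℕ) f (Icc 0 1) :=
    (hf.of_le (by exact_mod_cast le_top)).contDiffOn
  have hC' : ∀ t ∈ Icc (0:ℝ) 1, ‖iteratedDerivWithin (n+1) f (Icc 0 1) t‖ ≤ C := by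
    intro t ht
    rw [iDW_eq f hf (n+1) t ht]
    exact hC t ht
  have H := taylor_mean_remainder_bound (zero_le_one) hfO hx hC'
  have hpoly : taylorWithinEval f n (Icc (0:ℝ) 1) 0 x
      = ∑ k ∈ Finset.range (n+1), ((k.factorial:ℝ)⁻¹ * x^k) * iteratedDeriv k f 0 := by
    rw [taylor_within_apply]
    refine Finset.sum_congr rfl fun k _ => ?_
    rw [iDW_eq f hf k 0 h0]
    simp [smul_eq_mul]
  rw [hpoly] at H
  have hC0 : 0 ≤ C := le_trans (abs_nonneg _) (hC 0 h0)
  have hx0 : (0:ℝ) ≤ x := hx.1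
  calc |f x - _| ≤ C * (x - 0)^(n+1) / n.factorial := H
    _ ≤ C * x^(n+1) := by
        rw [sub_zero]
        exact div_le_self (by positivity) (by exact_mod_cast n.factorial_pos)

/-- The `(a,b)` Taylor coefficient of a two-variable function at the origin. -/
noncomputable def taylorCoeff (S : ℝ → ℝ → ℝ) (a b : ℕ) : ℝ :=
  iteratedDeriv a (fun x => iteratedDeriv b (fun y => S x y) 0) 0 /
    ((a.factorial : ℝ) * (b.factorial : ℝ))

set_option maxHeartbeats 1000000 in
/-- Lemma 2.4 c): if `(c,0)` is the vertex of the Newton polygon of `R` where the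
horizontal ray meets the compact edge lying on the supporting line `a + m b = α`
(so `α = c`), then in the region `0 < y < ξ x^m`, `R` is comparable to the monomial
`r_{c0} x^c` within relative error `δ`. -/
theorem comparable_to_horizontal_vertex_monomial (R : ℝ → ℝ → ℝ)
    (hR : ContDiff ℝ (⊤ : ℕ∞) (fun p : ℝ × ℝ => R p.1 p.2))
    (c : ℕ) (m α : ℝ) (hm : 0 < m) (hα : (c : ℝ) = α)
    (hc0 : taylorCoeff R c 0 ≠ 0)
    (hsupport : ∀ a b : ℕ, taylorCoeff R a b ≠ 0 → α ≤ (a : ℝ) + m * b) :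
    ∀ δ : ℝ, 0 < δ → ∃ r > (0 : ℝ), ∃ ξ > (0 : ℝ), ∀ x y : ℝ,
      0 < x → x < r → 0 < y → y < ξ * x ^ m →
      |R x y - taylorCoeff R c 0 * x ^ c| < δ * |taylorCoeff R c 0| * x ^ c := by
  intro δ hδ
  have hR' : ContDiff ℝ (⊤ : ℕ∞) (fun p : ℝ × ℝ => R p.1 p.2) := hR.of_le (by simp)
  set g : ℕ → ℝ → ℝ := fun b x => iteratedDeriv b (fun y => R x y) 0 with hgdef
  have hg : ∀ b, ContDiff ℝ (⊤ : ℕ∞) (g b) := by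
    intro b
    have hline : ContDiff ℝ (⊤ : ℕ∞) (fun x : ℝ => ((x, (0:ℝ)) : ℝ × ℝ)) :=
      contDiff_id.prodMk contDiff_const
    exact (partialY_smooth R hR' b).comp hline
  set B : ℕ := ⌈(c:ℝ)/m⌉₊ with hBdef
  have hmB : (c : ℝ) ≤ m * (B + 1) := by
    have h1 : (c:ℝ)/m ≤ B := Nat.le_ceil _
    have h2 : (c:ℝ) ≤ m * B := by
      rw [div_le_iff₀ hm] at h1; linarith [h1]
    nlinarith
  -- uniform bound for the (B+1)-st y-derivative
  obtain ⟨Cy0, hCy0⟩ := (isCompact_Icc.prod isCompact_Icc).exists_bound_of_continuousOn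
    ((partialY_smooth R hR' (B+1)).continuous.continuousOn
      (s := (Icc (0:ℝ) 1) ×ˢ (Icc (0:ℝ) 1)))
  set Cy := max Cy0 0 with hCydef
  have hCy0' : 0 ≤ Cy := le_max_right _ _
  have hCy : ∀ x ∈ Icc (0:ℝ) 1, ∀ t ∈ Icc (0:ℝ) 1,
      |iteratedDeriv (B+1) (fun y => R x y) t| ≤ Cy := by
    intro x hx t ht
    have := hCy0 (x, t) (mem_prod.2 ⟨hx, ht⟩)
    exact le_trans (by simpa using this) (le_max_left _ _)
  -- per-b bounds for the (c+1)-st x-derivative of g b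
  have hCbex : ∀ b : ℕ, ∃ C : ℝ, 0 ≤ C ∧ ∀ t ∈ Icc (0:ℝ) 1,
      |iteratedDeriv (c+1) (g b) t| ≤ C := by
    intro b
    obtain ⟨C, hC⟩ := isCompact_Icc.exists_bound_of_continuousOn
      ((ContDiff.continuous_iteratedDeriv (c+1) (hg b)
        (by exact_mod_cast le_top)).continuousOn (s := Icc (0:ℝ) 1))
    exact ⟨max C 0, le_max_right _ _, fun t ht =>
      le_trans (by simpa using hC t ht) (le_max_left _ _)⟩
  choose Cb hCb0 hCb using hCbex
  set C2 := ∑ b ∈ Finset.range (B+1), Cb b with hC2def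
  have hC20 : 0 ≤ C2 := Finset.sum_nonneg fun b _ => hCb0 b
  set D := (Finset.range (B+1)) ×ˢ (Finset.range (c+1)) with hDdef
  set M := ∑ q ∈ D, |taylorCoeff R q.2 q.1| with hMdef
  have hM0 : 0 ≤ M := Finset.sum_nonneg fun q _ => abs_nonneg _
  have habs : 0 < |taylorCoeff R c 0| := abs_pos.2 hc0
  have hden1 : 0 < 2 * (M + Cy + 1) := by linarith
  have hden2 : 0 < 2 * (C2 + 1) := by linarith
  set q1 := δ * |taylorCoeff R c 0| / (2 * (M + Cy + 1)) with hq1def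
  set q2 := δ * |taylorCoeff R c 0| / (2 * (C2 + 1)) with hq2def
  have hq1pos : 0 < q1 := div_pos (by positivity) hden1
  have hq2pos : 0 < q2 := div_pos (by positivity) hden2
  refine ⟨min 1 q2, lt_min one_pos hq2pos, min 1 q1, lt_min one_pos hq1pos, ?_⟩
  intro x y hx hxr hy hyξ
  set ξ := min 1 q1 with hξdef
  have hξpos : 0 < ξ := lt_min one_pos hq1pos
  have hξ1 : ξ ≤ 1 := min_le_left _ _
  have hξq : ξ ≤ q1 := min_le_right _ _
  have hx1 : x ≤ 1 := le_trans hxr.le (min_le_left _ _)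
  have hxq : x < q2 := lt_of_lt_of_le hxr (min_le_right _ _)
  have hxm0 : 0 ≤ x ^ m := Real.rpow_nonneg hx.le m
  have hxm1 : x ^ m ≤ 1 := Real.rpow_le_one hx.le hx1 hm.le
  have hy1 : y ≤ 1 := le_trans hyξ.le (mul_le_one₀ hξ1 hxm0 hxm1)
  have hxmem : x ∈ Icc (0:ℝ) 1 := ⟨hx.le, hx1⟩
  have hymem : y ∈ Icc (0:ℝ) 1 := ⟨hy.le, hy1⟩
  -- Taylor expansion in y
  have hfy : ContDiff ℝ (⊤ : ℕ∞) (fun y' => R x y') :=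
    hR'.comp (contDiff_const.prodMk contDiff_id)
  have hE1 : |R x y - ∑ b ∈ Finset.range (B+1),
      ((b.factorial:ℝ)⁻¹ * y^b) * g b x| ≤ Cy * y^(B+1) := by
    have := taylor_bound' (fun y' => R x y') hfy B Cy (fun t ht => hCy x hxmem t ht) y hymem
    simpa [hgdef] using this
  -- Taylor expansion in x, for each b
  set S : ℕ → ℝ := fun b => ∑ a ∈ Finset.range (c+1),
      ((a.factorial:ℝ)⁻¹ * x^a) * iteratedDeriv a (g b) 0 with hSdef
  have hE2b : ∀ b, |g b x - S b| ≤ Cb b * x^(c+1) := fun b =>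
    taylor_bound' (g b) (hg b) c (Cb b) (hCb b) x hxmem
  -- the monomial function
  set F : ℕ × ℕ → ℝ := fun q => taylorCoeff R q.2 q.1 * x^q.2 * y^q.1 with hFdef
  -- rewriting each inner Taylor polynomial as monomials
  have hSb : ∀ b, ((b.factorial:ℝ)⁻¹ * y^b) * S b
      = ∑ a ∈ Finset.range (c+1), F (b, a) := by
    intro b
    rw [hSdef, Finset.mul_sum]
    refine Finset.sum_congr rfl fun a _ => ?_
    have hfa : ((a.factorial:ℝ)) ≠ 0 := Nat.cast_ne_zero.2 (Nat.factorial_ne_zero a)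
    have hfb : ((b.factorial:ℝ)) ≠ 0 := Nat.cast_ne_zero.2 (Nat.factorial_ne_zero b)
    show ((b.factorial:ℝ)⁻¹ * y^b) * (((a.factorial:ℝ)⁻¹ * x^a) * iteratedDeriv a (g b) 0)
      = taylorCoeff R a b * x^a * y^b
    rw [taylorCoeff]
    have : iteratedDeriv a (fun x => iteratedDeriv b (fun y => R x y) 0) 0
        = iteratedDeriv a (g b) 0 := rfl
    rw [this]
    field_simp
  have hT1 : (∑ b ∈ Finset.range (B+1), ((b.factorial:ℝ)⁻¹ * y^b) * g b x)
      = (∑ b ∈ Finset.range (B+1), ((b.factorial:ℝ)⁻¹ * y^b) * (g b x - S b))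
        + ∑ q ∈ D, F q := by
    rw [hDdef, Finset.sum_product, ← Finset.sum_add_distrib]
    refine Finset.sum_congr rfl fun b _ => ?_
    rw [← hSb b]
    ring
  have hmemD : ((0:ℕ), c) ∈ D := by
    simp [hDdef]
  have hD : ∑ q ∈ D, F q = taylorCoeff R c 0 * x^c + ∑ q ∈ D.erase (0, c), F q := by
    rw [← Finset.add_sum_erase D F hmemD]
    simp [hFdef]
  -- bound on the individual deleted monomials
  have hFq : ∀ q ∈ D.erase ((0:ℕ), c), |F q| ≤ |taylorCoeff R q.2 q.1| * (ξ * x^c) := by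
    intro q hq
    obtain ⟨hne, hqD⟩ := Finset.mem_erase.1 hq
    rw [hDdef, Finset.mem_product, Finset.mem_range, Finset.mem_range] at hqD
    by_cases h0 : taylorCoeff R q.2 q.1 = 0
    · simp [hFdef, h0]
    · have hs : (c:ℝ) ≤ (q.2 : ℝ) + m * q.1 := hα ▸ hsupport q.2 q.1 h0
      rcases Nat.eq_zero_or_pos q.1 with hb0 | hb1
      · exfalso
        have : (c:ℝ) ≤ (q.2:ℝ) := by rw [hb0] at hs; simpa using hs
        have h1 : c ≤ q.2 := by exact_mod_cast this
        have h2 : q.2 ≤ c := Nat.lt_succ_iff.1 hqD.2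
        apply hne
        have : q.2 = c := le_antisymm h2 h1
        ext <;> simp [hb0, this]
      · have hxa : |F q| = |taylorCoeff R q.2 q.1| * (x^q.2 * y^q.1) := by
          rw [hFdef]
          rw [abs_mul, abs_mul, abs_of_nonneg (by positivity : (0:ℝ) ≤ x^q.2),
            abs_of_nonneg (by positivity : (0:ℝ) ≤ y^q.1)]
          ring
        rw [hxa]
        refine mul_le_mul_of_nonneg_left ?_ (abs_nonneg _)
        have hyb : y^q.1 ≤ (ξ * x^m)^q.1 := pow_le_pow_left₀ hy.le hyξ.le q.1
        have hsplit : (ξ * x^m)^q.1 = ξ^q.1 * (x^m)^q.1 := mul_pow _ _ _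
        have hrpow : x^(q.2:ℕ) * (x^m)^(q.1:ℕ) = x ^ ((q.2:ℝ) + m * q.1) := by
          rw [← Real.rpow_natCast x q.2, ← Real.rpow_natCast (x^m) q.1,
            ← Real.rpow_mul hx.le, ← Real.rpow_add hx]
        have hexp : x ^ ((q.2:ℝ) + m * q.1) ≤ x ^ ((c:ℝ)) :=
          Real.rpow_le_rpow_of_exponent_ge hx hx1 hs
        have hxc : x ^ ((c:ℝ)) = x ^ c := Real.rpow_natCast x c
        have hξb : ξ^q.1 ≤ ξ := by
          calc ξ^q.1 ≤ ξ^1 := pow_le_pow_of_le_one hξpos.le hξ1 hb1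
            _ = ξ := pow_one ξ
        calc x^q.2 * y^q.1 ≤ x^q.2 * (ξ^q.1 * (x^m)^q.1) := by
              rw [← hsplit]
              exact mul_le_mul_of_nonneg_left hyb (by positivity)
          _ = ξ^q.1 * (x^q.2 * (x^m)^q.1) := by ring
          _ ≤ ξ * (x^c) := by
              rw [hrpow]
              have h1 : x ^ ((q.2:ℝ) + m * q.1) ≤ x^c := hxc ▸ hexp
              have h2 : (0:ℝ) ≤ x ^ ((q.2:ℝ) + m * q.1) := Real.rpow_nonneg hx.le _
              exact mul_le_mul hξb h1 h2 hξpos.le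
  -- bound for the deleted monomial sum
  have hE3 : |∑ q ∈ D.erase ((0:ℕ), c), F q| ≤ M * (ξ * x^c) := by
    calc |∑ q ∈ D.erase ((0:ℕ), c), F q| ≤ ∑ q ∈ D.erase ((0:ℕ), c), |F q| :=
          Finset.abs_sum_le_sum_abs _ _
      _ ≤ ∑ q ∈ D.erase ((0:ℕ), c), |taylorCoeff R q.2 q.1| * (ξ * x^c) :=
          Finset.sum_le_sum hFq
      _ ≤ ∑ q ∈ D, |taylorCoeff R q.2 q.1| * (ξ * x^c) :=
          Finset.sum_le_sum_of_subset_of_nonneg (Finset.erase_subset _ _)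
            (fun q _ _ => by positivity)
      _ = M * (ξ * x^c) := by rw [hMdef, Finset.sum_mul]
  -- bound for the x-remainders
  have hE2 : |∑ b ∈ Finset.range (B+1), ((b.factorial:ℝ)⁻¹ * y^b) * (g b x - S b)|
      ≤ C2 * (x^c * x) := by
    have hterm : ∀ b ∈ Finset.range (B+1),
        |((b.factorial:ℝ)⁻¹ * y^b) * (g b x - S b)| ≤ Cb b * x^(c+1) := by
      intro b _
      have h1 : (1:ℝ) ≤ (b.factorial:ℝ) := Nat.one_le_cast.2 b.factorial_pos
      have hle1 : (b.factorial:ℝ)⁻¹ * y^b ≤ 1 := by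
        have hy' : y^b ≤ 1 := pow_le_one₀ hy.le hy1
        have hi : (b.factorial:ℝ)⁻¹ ≤ 1 := inv_le_one_of_one_le₀ h1
        nlinarith [pow_nonneg hy.le b]
      rw [abs_mul, abs_of_nonneg (show (0:ℝ) ≤ (b.factorial:ℝ)⁻¹ * y^b by positivity)]
      calc ((b.factorial:ℝ)⁻¹ * y^b) * |g b x - S b| ≤ 1 * (Cb b * x^(c+1)) :=
            mul_le_mul hle1 (hE2b b) (abs_nonneg _) one_pos.le
        _ = Cb b * x^(c+1) := one_mul _
    calc |∑ b ∈ Finset.range (B+1), ((b.factorial:ℝ)⁻¹ * y^b) * (g b x - S b)|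
        ≤ ∑ b ∈ Finset.range (B+1), |((b.factorial:ℝ)⁻¹ * y^b) * (g b x - S b)| :=
          Finset.abs_sum_le_sum_abs _ _
      _ ≤ ∑ b ∈ Finset.range (B+1), Cb b * x^(c+1) := Finset.sum_le_sum hterm
      _ = C2 * x^(c+1) := by rw [hC2def, Finset.sum_mul]
      _ = C2 * (x^c * x) := by rw [pow_succ]
  -- bound for the y-remainder
  have hyB : y^(B+1) ≤ ξ * x^c := by
    have h1 : (x^m)^(B+1) = x ^ (m*((B+1:ℕ):ℝ)) := by
      rw [← Real.rpow_natCast (x^m) (B+1), ← Real.rpow_mul hx.le]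
    have h2 : x ^ (m*((B+1:ℕ):ℝ)) ≤ x ^ ((c:ℝ)) := by
      refine Real.rpow_le_rpow_of_exponent_ge hx hx1 ?_
      push_cast
      push_cast at hmB
      linarith
    have h3 : ξ^(B+1) ≤ ξ := by
      calc ξ^(B+1) ≤ ξ^1 := pow_le_pow_of_le_one hξpos.le hξ1 (by omega)
        _ = ξ := pow_one ξ
    have hxc : x ^ ((c:ℝ)) = x ^ c := Real.rpow_natCast x c
    calc y^(B+1) ≤ (ξ * x^m)^(B+1) := pow_le_pow_left₀ hy.le hyξ.le _
      _ = ξ^(B+1) * (x^m)^(B+1) := mul_pow _ _ _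
      _ ≤ ξ * x^c := by
          refine mul_le_mul h3 ?_ (by positivity) hξpos.le
          rw [h1, ← hxc]
          exact h2
  have hE1' : |R x y - ∑ b ∈ Finset.range (B+1), ((b.factorial:ℝ)⁻¹ * y^b) * g b x|
      ≤ Cy * (ξ * x^c) := hE1.trans (mul_le_mul_of_nonneg_left hyB hCy0')
  -- key decomposition
  have key : R x y - taylorCoeff R c 0 * x^c
      = (R x y - ∑ b ∈ Finset.range (B+1), ((b.factorial:ℝ)⁻¹ * y^b) * g b x)
        + (∑ b ∈ Finset.range (B+1), ((b.factorial:ℝ)⁻¹ * y^b) * (g b x - S b))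
        + ∑ q ∈ D.erase ((0:ℕ), c), F q := by
    have h1 := hT1
    have h2 := hD
    linarith
  rw [key]
  have hxc0 : (0:ℝ) < x^c := pow_pos hx c
  refine lt_of_le_of_lt ((abs_add_three _ _ _).trans
    (add_le_add (add_le_add hE1' hE2) hE3)) ?_
  have hrw : Cy*(ξ*x^c) + C2*(x^c*x) + M*(ξ*x^c) = (Cy*ξ + C2*x + M*ξ) * x^c := by ring
  rw [hrw]
  have hgoal : Cy*ξ + C2*x + M*ξ < δ * |taylorCoeff R c 0| := by
    have e1 : q1 * (2*(M+Cy+1)) = δ*|taylorCoeff R c 0| := div_mul_cancel₀ _ (ne_of_gt hden1)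
    have e2 : q2 * (2*(C2+1)) = δ*|taylorCoeff R c 0| := div_mul_cancel₀ _ (ne_of_gt hden2)
    nlinarith [mul_nonneg (by linarith : (0:ℝ) ≤ M + Cy) (by linarith : (0:ℝ) ≤ q1 - ξ),
      mul_pos (by linarith : (0:ℝ) < C2 + 1) (by linarith : (0:ℝ) < q2 - x),
      hq1pos, hx, hξpos]
  calc (Cy*ξ + C2*x + M*ξ) * x^c < (δ * |taylorCoeff R c 0|) * x^c :=
        mul_lt_mul_of_pos_right hgoal hxc0
    _ = δ * |taylorCoeff R c 0| * x^c := by ring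
end
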